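/- arXiv:math/0108198 — 2 statements merged into one kernel-verified Lean document; each statement's English description precedes it below -/
import Mathlib

section
/- Let f : ℝ → ℝ be continuous with f(s)/s → l > 0 as s → 0⁺, f > 0 on (0,1), and let U₀ : [0,∞) → (0,1) be a C², strictly positive, strictly decreasing solution of U₀''(r) + ((2n-1)/r) U₀'(r) + f(U₀(r)) = 0 with lim_{r→∞} U₀(r) = 0. Then no such U₀ exists (a contradiction arises). -/
/-!
With `m = 2n - 1` the equation reads `(r^m U')' = -r^m f(U) < 0`, so `r^m U'` is eventually
below a negative constant: `U' ≤ -c r^(-m)`, and `U(r) ≥ U(r) - U(2r) ≥ c' r^(1-m)` decays at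
most polynomially. On the other hand `f(U) ≥ (l/2) U` once `U` is small; integrating
`(s^m U')' ≤ -(l/2) s^m U(r)` over `s ∈ [r/2, r]` (where `U(s) ≥ U(r)`) gives `U' ≤ -δ U`,
so `U` decays exponentially, which is incompatible with the polynomial lower bound.
-/

open Set Filter Topology Real

lemma HasDerivAt.nonpos_of_antitoneOn {g : ℝ → ℝ} {g' x : ℝ} {s : Set ℝ}
    (hd : HasDerivAt g g' x) (hg : AntitoneOn g s) (hs : s ∈ 𝓝 x) : g' ≤ 0 :=
  hd.hasDerivWithinAt.nonpos_of_antitoneOn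
    (by simpa using (PerfectSpace.univ_preperfect x (mem_univ x)).nhds_inter hs) hg

lemma sub_le_mul_sub_of_hasDerivAt_le {u u' : ℝ → ℝ} {a b C : ℝ} (hab : a ≤ b)
    (hu : ∀ x ∈ Icc a b, HasDerivAt u (u' x) x) (h : ∀ x ∈ Icc a b, u' x ≤ C) :
    u b - u a ≤ C * (b - a) := by
  refine (convex_Icc a b).image_sub_le_mul_sub_of_deriv_le
    (fun x hx => (hu x hx).continuousAt.continuousWithinAt)
    (fun x hx => (hu x (interior_subset hx)).differentiableAt.differentiableWithinAt)
    (fun x hx => ?_) a (left_mem_Icc.2 hab) b (right_mem_Icc.2 hab) hab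
  rw [(hu x (interior_subset hx)).deriv]
  exact h x (interior_subset hx)

lemma antitoneOn_mul_exp_of_deriv_le_neg_mul {u u' : ℝ → ℝ} {δ a : ℝ}
    (hu : ∀ x ≥ a, HasDerivAt u (u' x) x) (h : ∀ x ≥ a, u' x ≤ -δ * u x) :
    AntitoneOn (fun x => u x * exp (δ * x)) (Ici a) := by
  have hd : ∀ x ≥ a, HasDerivAt (fun x => u x * exp (δ * x))
      ((u' x + δ * u x) * exp (δ * x)) x := fun x hx => by
    refine ((hu x hx).mul ((hasDerivAt_id x).const_mul δ).exp).congr_deriv ?_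
    simp only [id, mul_one]
    ring
  refine antitoneOn_of_hasDerivWithinAt_nonpos (convex_Ici a)
    (fun x hx => (hd x hx).continuousAt.continuousWithinAt)
    (fun x hx => (hd x (interior_subset hx)).hasDerivWithinAt) (fun x hx => ?_)
  have hx : a ≤ x := interior_subset hx
  exact mul_nonpos_of_nonpos_of_nonneg (by linarith [h x hx]) (exp_pos _).le

lemma false_of_le_mul_pow_of_mul_exp_le {u : ℝ → ℝ} {m : ℕ} {c δ A : ℝ} (hc : 0 < c)
    (hδ : 0 < δ) (hlow : ∀ᶠ r in atTop, c ≤ u r * r ^ m)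
    (hup : ∀ᶠ r in atTop, u r * exp (δ * r) ≤ A) : False := by
  have hlim : Tendsto (fun r : ℝ => A * (r ^ m * exp (-δ * r))) atTop (𝓝 0) := by
    simpa using (tendsto_rpow_mul_exp_neg_mul_atTop_nhds_zero m δ hδ).const_mul A
  obtain ⟨r, hlow, hup, hsmall, hr⟩ :=
    (hlow.and (hup.and ((hlim.eventually_lt_const hc).and (eventually_ge_atTop 0)))).exists
  have hsplit : u r * r ^ m = u r * exp (δ * r) * (r ^ m * exp (-δ * r)) := by
    rw [neg_mul, exp_neg]
    field_simp
  have : u r * r ^ m ≤ A * (r ^ m * exp (-δ * r)) :=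
    hsplit ▸ mul_le_mul_of_nonneg_right hup (by positivity)
  linarith

section RadialODE

-- `q r` stands for `f (U r)`, and `U'` for the derivative of `U`.
variable {m : ℕ} {U U' q : ℝ → ℝ}

lemma hasDerivAt_pow_mul_of_radial {u'' r : ℝ} (hr : r ≠ 0) (hU' : HasDerivAt U' u'' r)
    (hode : u'' + m / r * U' r + q r = 0) :
    HasDerivAt (fun s => s ^ m * U' s) (-(r ^ m * q r)) r := by
  refine ((hasDerivAt_pow m r).mul hU').congr_deriv ?_
  have hu'' : u'' = -(m / r * U' r) - q r := by linarith
  rcases m with _ | k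
  · simp [hu'']
  · rw [hu'', pow_succ]
    field_simp
    push_cast
    ring

lemma exists_deriv_le_neg_div_pow_of_radial
    (hg : ∀ r > 0, HasDerivAt (fun s => s ^ m * U' s) (-(r ^ m * q r)) r)
    (hq : ∀ r > 0, 0 < q r) (hU'1 : U' 1 ≤ 0) :
    ∃ c > 0, ∀ r ≥ 2, U' r ≤ -c / r ^ m := by
  have hanti : StrictAntiOn (fun s => s ^ m * U' s) (Ioi 0) :=
    strictAntiOn_of_hasDerivWithinAt_neg (convex_Ioi 0)
      (fun r hr => (hg r hr).continuousAt.continuousWithinAt)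
      (fun r hr => (hg r (interior_subset hr)).hasDerivWithinAt)
      (fun r hr => neg_neg_of_pos (mul_pos (pow_pos (interior_subset hr) m)
        (hq r (interior_subset hr))))
  have h21 : 2 ^ m * U' 2 < 1 ^ m * U' 1 := hanti (by norm_num) (by norm_num) (by norm_num)
  refine ⟨-(2 ^ m * U' 2), by simp at h21; linarith, fun r hr => ?_⟩
  have hr0 : 0 < r := by linarith
  have h2r : r ^ m * U' r ≤ 2 ^ m * U' 2 :=
    hanti.antitoneOn (by norm_num) (mem_Ioi.2 hr0) hr
  rw [le_div_iff₀ (pow_pos hr0 m)]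
  linarith

lemma exists_le_mul_pow_of_radial (hU : ∀ r > 0, HasDerivAt U (U' r) r)
    (hg : ∀ r > 0, HasDerivAt (fun s => s ^ m * U' s) (-(r ^ m * q r)) r)
    (hq : ∀ r > 0, 0 < q r) (hpos : ∀ r > 0, 0 < U r) (hU'1 : U' 1 ≤ 0) :
    ∃ c > 0, ∀ᶠ r in atTop, c ≤ U r * r ^ m := by
  obtain ⟨c, hc, hU'c⟩ := exists_deriv_le_neg_div_pow_of_radial hg hq hU'1
  refine ⟨c / 2 ^ m, by positivity, eventually_atTop.2 ⟨2, fun r hr => ?_⟩⟩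
  have hr0 : 0 < r := by linarith
  have hdrop : U (2 * r) - U r ≤ -c / (2 * r) ^ m * (2 * r - r) := by
    refine sub_le_mul_sub_of_hasDerivAt_le (by linarith) (fun s hs => hU s (by linarith [hs.1]))
      (fun s hs => (hU'c s (by linarith [hs.1])).trans ?_)
    rw [neg_div, neg_div, neg_le_neg_iff]
    exact div_le_div_of_nonneg_left hc.le (pow_pos (by linarith [hs.1]) m)
      (pow_le_pow_left₀ (by linarith [hs.1]) hs.2 m)
  have h2r := hpos (2 * r) (by linarith)
  rw [show 2 * r - r = r by ring, neg_div, neg_mul] at hdrop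
  have hrm : 0 < r ^ m := pow_pos hr0 m
  calc c / 2 ^ m = c / (2 * r) ^ m * r ^ m := by rw [mul_pow]; field_simp
    _ ≤ c / (2 * r) ^ m * r * r ^ m := by
      gcongr
      exact le_mul_of_one_le_right (by positivity) (by linarith)
    _ ≤ U r * r ^ m := by gcongr; linarith

lemma deriv_le_neg_mul_of_radial {k R r : ℝ} (hk : 0 ≤ k) (hR : 0 < R) (hr : 2 * R ≤ r)
    (hg : ∀ s > 0, HasDerivAt (fun s => s ^ m * U' s) (-(s ^ m * q s)) s)
    (hq : ∀ s ≥ R, k * U s ≤ q s) (hanti : AntitoneOn U (Ioi 0)) (hUr : 0 ≤ U r)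
    (hU' : U' (r / 2) ≤ 0) :
    U' r ≤ -(k / 2 ^ (m + 1) * r * U r) := by
  have hr0 : 0 < r := by linarith
  have hgap : r ^ m * U' r - (r / 2) ^ m * U' (r / 2) ≤
      -((r / 2) ^ m * (k * U r)) * (r - r / 2) := by
    refine sub_le_mul_sub_of_hasDerivAt_le (by linarith) (fun s hs => hg s (by linarith [hs.1]))
      (fun s hs => neg_le_neg ?_)
    have hs0 : 0 < s := by linarith [hs.1]
    have hUs : k * U r ≤ q s :=
      (mul_le_mul_of_nonneg_left (hanti hs0 hr0 hs.2) hk).trans (hq s (by linarith [hs.1]))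
    exact mul_le_mul (pow_le_pow_left₀ (by linarith) hs.1 m) hUs (by positivity) (by positivity)
  have hmid : 0 ≤ (r / 2) ^ m * -U' (r / 2) := mul_nonneg (by positivity) (by linarith)
  have hrm : 0 < r ^ m := pow_pos hr0 m
  rw [← mul_le_mul_iff_of_pos_left hrm]
  calc r ^ m * U' r ≤ -((r / 2) ^ m * (k * U r)) * (r - r / 2) := by linarith
    _ = r ^ m * -(k / 2 ^ (m + 1) * r * U r) := by rw [div_pow]; field_simp; ring

theorem not_antitoneOn_of_radial_ode {U'' : ℝ → ℝ} {l : ℝ} (hl : 0 < l)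
    (hU : ∀ r > 0, HasDerivAt U (U' r) r) (hU' : ∀ r > 0, HasDerivAt U' (U'' r) r)
    (hode : ∀ r > 0, U'' r + m / r * U' r + q r = 0) (hpos : ∀ r > 0, 0 < U r)
    (hq : ∀ r > 0, 0 < q r) (hqlin : ∀ᶠ r in atTop, l * U r ≤ q r) :
    ¬ AntitoneOn U (Ioi 0) := by
  intro hanti
  have hg r (hr : r > 0) := hasDerivAt_pow_mul_of_radial hr.ne' (hU' r hr) (hode r hr)
  have hU'nonpos r (hr : r > 0) : U' r ≤ 0 :=
    (hU r hr).nonpos_of_antitoneOn hanti (Ioi_mem_nhds hr)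
  obtain ⟨c, hc, hlow⟩ := exists_le_mul_pow_of_radial hU hg hq hpos (hU'nonpos 1 one_pos)
  obtain ⟨R, hR⟩ := eventually_atTop.1 hqlin
  set R₁ := max R 1
  have hδ : 0 < l / 2 ^ (m + 1) := by positivity
  have hdecay : ∀ r ≥ 2 * R₁, U' r ≤ -(l / 2 ^ (m + 1)) * U r := fun r hr => by
    have hr1 : 1 ≤ r := by linarith [le_max_right R 1]
    have hUr := hpos r (by linarith)
    have := deriv_le_neg_mul_of_radial hl.le (by positivity) hr hg
      (fun s hs => hR s (le_of_max_le_left hs)) hanti hUr.le (hU'nonpos (r / 2) (by linarith))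
    nlinarith [mul_le_mul_of_nonneg_left hr1 (mul_pos hδ hUr).le]
  have hexp := antitoneOn_mul_exp_of_deriv_le_neg_mul
    (fun r hr => hU r (by linarith [le_max_right R 1])) hdecay
  exact false_of_le_mul_pow_of_mul_exp_le hc hδ hlow
    (eventually_atTop.2 ⟨2 * R₁, fun r hr => hexp self_mem_Ici hr hr⟩)

end RadialODE

theorem stmt5_general (n : ℕ) (hn : 1 ≤ n) (l : ℝ) (hl : 0 < l)
    (f : ℝ → ℝ)
    (hflim : Tendsto (fun s => f s / s) (nhdsWithin 0 (Ioi 0)) (nhds l))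
    (hfpos : ∀ s ∈ Ioo (0:ℝ) 1, 0 < f s)
    (U : ℝ → ℝ) (hU : ContDiffOn ℝ 2 U (Ici 0))
    (hrange : ∀ r ≥ (0:ℝ), U r ∈ Ioo (0:ℝ) 1)
    (hanti : StrictAntiOn U (Ici 0))
    (hode : ∀ r > (0:ℝ),
      deriv (deriv U) r + ((2 * n - 1 : ℝ) / r) * deriv U r + f (U r) = 0)
    (hlim : Tendsto U atTop (nhds 0)) :
    False := by
  have hm : ((2 * n - 1 : ℕ) : ℝ) = 2 * n - 1 := by
    rw [Nat.cast_sub (by omega)]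
    push_cast
    ring
  have hpos r (hr : r ≥ 0) : 0 < U r := (hrange r hr).1
  have hU2 : ContDiffOn ℝ 2 U (Ioi 0) := hU.mono Ioi_subset_Ici_self
  have hU1 : ContDiffOn ℝ 1 (deriv U) (Ioi 0) := hU2.deriv_of_isOpen isOpen_Ioi (by norm_num)
  have hUsmall : Tendsto U atTop (𝓝[>] 0) :=
    tendsto_nhdsWithin_iff.2 ⟨hlim, eventually_atTop.2 ⟨0, hpos⟩⟩
  have hflin : ∀ᶠ r in atTop, l / 2 * U r ≤ f (U r) := by
    filter_upwards [(hflim.comp hUsmall).eventually (lt_mem_nhds (half_lt_self hl)),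
      eventually_ge_atTop 0] with r hr hr0
    exact ((lt_div_iff₀ (hpos r hr0)).1 hr).le
  refine not_antitoneOn_of_radial_ode (m := 2 * n - 1) (half_pos hl)
    (fun r hr => ((hU2.differentiableOn (by norm_num)).differentiableAt
      (Ioi_mem_nhds hr)).hasDerivAt)
    (fun r hr => ((hU1.differentiableOn one_ne_zero).differentiableAt
      (Ioi_mem_nhds hr)).hasDerivAt)
    (fun r hr => hm ▸ hode r hr) (fun r hr => hpos r hr.le)
    (fun r hr => hfpos _ (hrange r hr.le)) hflin
    (hanti.antitoneOn.mono Ioi_subset_Ici_self)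

/-- no strictly decreasing solution `U₀ : [0,∞) → (0,1)` of
`U₀'' + ((2n-1)/r)U₀' + f(U₀) = 0` with `U₀ → 0` at infinity exists, when
`f(s)/s → l > 0` as `s → 0⁺` and `f > 0` on `(0,1)`. -/
theorem stmt5 (n : ℕ) (hn : 1 ≤ n) (l : ℝ) (hl : 0 < l)
    (f : ℝ → ℝ) (hf : Continuous f)
    (hflim : Tendsto (fun s => f s / s) (nhdsWithin 0 (Ioi 0)) (nhds l))
    (hfpos : ∀ s ∈ Ioo (0:ℝ) 1, 0 < f s)
    (U : ℝ → ℝ) (hU : ContDiffOn ℝ 2 U (Ici 0))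
    (hrange : ∀ r ≥ (0:ℝ), U r ∈ Ioo (0:ℝ) 1)
    (hanti : StrictAntiOn U (Ici 0))
    (hU'0 : deriv U 0 = 0)
    (hode : ∀ r > (0:ℝ),
      deriv (deriv U) r + ((2 * n - 1 : ℝ) / r) * deriv U r + f (U r) = 0)
    (hlim : Tendsto U atTop (nhds 0)) :
    False :=
  stmt5_general n hn l hl f hflim hfpos U hU hrange hanti hode hlim
end

section
/- There is no function U : ℝ → ℝ of class C², no vector α ∈ ℝ^{2n} \ {0} together with ν > 0, such that the function u(z,t) = U(α·z + νt) on ℝ^{2n+1} satisfies (|α|² - 4ν (Jα·z) + 4|z|²ν²) U''(α·z + νt) = U(α·z + νt)(U(α·z + νt)² - 1) for all (z,t), unless U is constant with value in {-1,0,1}; in particular no such u can satisfy -1 < u < 1 and ∂u/∂t > 0. -/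
open Set

/-!
Evaluate the equation at the same value `s` of the phase `⟪a, x⟫ + ⟪b, y⟫ + ν t` at two points:
at `(x, y) = (0, 0)` the coefficient is `K = ‖a‖² + ‖b‖²`, at `(x, y) = (a, b)` the symplectic
term `⟪b, a⟫ - ⟪a, b⟫` vanishes and the coefficient is `K + 4Kν²`. Subtracting gives
`4Kν² U''(s) = 0`, so `U'' ≡ 0` and the equation collapses to `U (U² - 1) = 0`. A continuous
function with values in `{-1, 0, 1}` is constant, hence `∂u/∂t = ν U' = 0`.
-/

theorem IsPreconnected.exists_eqOn_const_of_mul_sq_sub_one_eq_zero {X R : Type*}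
    [TopologicalSpace X] [Ring R] [NoZeroDivisors R] [TopologicalSpace R] [T1Space R]
    {S : Set X} (hS : IsPreconnected S) {f : X → R} (hf : ContinuousOn f S)
    (hroot : ∀ x ∈ S, f x * (f x ^ 2 - 1) = 0) :
    ∃ c, EqOn f (fun _ => c) S ∧ (c = -1 ∨ c = 0 ∨ c = 1) := by
  have hmaps : MapsTo f S {-1, 0, 1} := fun x hx => by
    rcases mul_eq_zero.mp (hroot x hx) with h | h
    · simp [h]
    · rcases sq_eq_one_iff.mp (sub_eq_zero.mp h) with h' | h' <;> simp [h']
  obtain ⟨c, hc, hfc⟩ :=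
    hS.eqOn_const_of_mapsTo (toFinite _).isDiscrete hf hmaps (insert_nonempty _ _)
  exact ⟨c, hfc, hc⟩

theorem profile_mul_sq_sub_one_eq_zero {n : ℕ} {U : ℝ → ℝ} {a b : EuclideanSpace ℝ (Fin n)}
    (hab : ¬(a = 0 ∧ b = 0)) {ν : ℝ} (hν : ν ≠ 0)
    (hpde : ∀ (x y : EuclideanSpace ℝ (Fin n)) (t : ℝ),
      (‖a‖ ^ 2 + ‖b‖ ^ 2 - 4 * ν * ((inner ℝ b x : ℝ) - (inner ℝ a y : ℝ))
          + 4 * (‖x‖ ^ 2 + ‖y‖ ^ 2) * ν ^ 2) *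
        deriv (deriv U) ((inner ℝ a x : ℝ) + (inner ℝ b y : ℝ) + ν * t) =
      U ((inner ℝ a x : ℝ) + (inner ℝ b y : ℝ) + ν * t) *
        (U ((inner ℝ a x : ℝ) + (inner ℝ b y : ℝ) + ν * t) ^ 2 - 1))
    (s : ℝ) : U s * (U s ^ 2 - 1) = 0 := by
  set K := ‖a‖ ^ 2 + ‖b‖ ^ 2
  have hK : K ≠ 0 := by
    rcases not_and_or.mp hab with h | h
    · exact (by positivity : 0 < K).ne'
    · exact (by positivity : 0 < K).ne'
  have at_origin : K * deriv (deriv U) s = U s * (U s ^ 2 - 1) := by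
    simpa [mul_div_cancel₀ _ hν] using hpde 0 0 (s / ν)
  have at_ab : (K + 4 * K * ν ^ 2) * deriv (deriv U) s = U s * (U s ^ 2 - 1) := by
    have hphase : ‖a‖ ^ 2 + ‖b‖ ^ 2 + ν * ((s - K) / ν) = s := by
      rw [mul_div_cancel₀ _ hν]; ring
    have h := hpde a b ((s - K) / ν)
    rw [real_inner_self_eq_norm_sq, real_inner_self_eq_norm_sq, hphase, real_inner_comm a b] at h
    linear_combination h
  have hU'' : deriv (deriv U) s = 0 := by
    have : (4 * K * ν ^ 2) * deriv (deriv U) s = 0 := by linear_combination at_ab - at_origin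
    simpa [hK, hν] using this
  rw [← at_origin, hU'', mul_zero]

theorem stmt6_general (n : ℕ) (U : ℝ → ℝ) (hU : ContDiff ℝ 2 U)
    (a b : EuclideanSpace ℝ (Fin n)) (hab : ¬(a = 0 ∧ b = 0)) (ν : ℝ) (hν : 0 < ν)
    (hpde : ∀ (x y : EuclideanSpace ℝ (Fin n)) (t : ℝ),
      (‖a‖ ^ 2 + ‖b‖ ^ 2 - 4 * ν * ((inner ℝ b x : ℝ) - (inner ℝ a y : ℝ))
          + 4 * (‖x‖ ^ 2 + ‖y‖ ^ 2) * ν ^ 2) *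
        deriv (deriv U) ((inner ℝ a x : ℝ) + (inner ℝ b y : ℝ) + ν * t) =
      U ((inner ℝ a x : ℝ) + (inner ℝ b y : ℝ) + ν * t) *
        (U ((inner ℝ a x : ℝ) + (inner ℝ b y : ℝ) + ν * t) ^ 2 - 1)) :
    (∃ c : ℝ, (∀ s : ℝ, U s = c) ∧ (c = -1 ∨ c = 0 ∨ c = 1)) ∧
    ¬((∀ (x y : EuclideanSpace ℝ (Fin n)) (t : ℝ),
          -1 < U ((inner ℝ a x : ℝ) + (inner ℝ b y : ℝ) + ν * t) ∧
          U ((inner ℝ a x : ℝ) + (inner ℝ b y : ℝ) + ν * t) < 1) ∧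
      (∀ (x y : EuclideanSpace ℝ (Fin n)) (t : ℝ),
          0 < ν * deriv U ((inner ℝ a x : ℝ) + (inner ℝ b y : ℝ) + ν * t))) := by
  obtain ⟨c, hc, hvals⟩ := isPreconnected_univ.exists_eqOn_const_of_mul_sq_sub_one_eq_zero
    hU.continuous.continuousOn fun s _ => profile_mul_sq_sub_one_eq_zero hab hν.ne' hpde s
  have hUc : U = fun _ => c := funext fun s => hc (mem_univ s)
  refine ⟨⟨c, fun s => hc (mem_univ s), hvals⟩, fun ⟨_, hpos⟩ => ?_⟩
  simpa [hUc] using hpos 0 0 0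

/-- there is no non-constant one-dimensional profile in a direction involving
the center. If `u(z,t) = U(α·z + νt)` with `α = (a,b) ≠ 0`, `ν > 0`, satisfies
`(|α|² - 4ν(Jα·z) + 4|z|²ν²) U'' = U(U²-1)` everywhere (here `Jα·z = b·x - a·y`),
then `U` is constant with value in `{-1,0,1}`; in particular `u` cannot satisfy
`-1 < u < 1` and `∂u/∂t = ν U' > 0`. -/
theorem stmt6 (n : ℕ) (hn : 1 ≤ n) (U : ℝ → ℝ) (hU : ContDiff ℝ 2 U)
    (a b : EuclideanSpace ℝ (Fin n)) (hab : ¬(a = 0 ∧ b = 0)) (ν : ℝ) (hν : 0 < ν)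
    (hpde : ∀ (x y : EuclideanSpace ℝ (Fin n)) (t : ℝ),
      (‖a‖ ^ 2 + ‖b‖ ^ 2 - 4 * ν * ((inner ℝ b x : ℝ) - (inner ℝ a y : ℝ))
          + 4 * (‖x‖ ^ 2 + ‖y‖ ^ 2) * ν ^ 2) *
        deriv (deriv U) ((inner ℝ a x : ℝ) + (inner ℝ b y : ℝ) + ν * t) =
      U ((inner ℝ a x : ℝ) + (inner ℝ b y : ℝ) + ν * t) *
        (U ((inner ℝ a x : ℝ) + (inner ℝ b y : ℝ) + ν * t) ^ 2 - 1)) :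
    (∃ c : ℝ, (∀ s : ℝ, U s = c) ∧ (c = -1 ∨ c = 0 ∨ c = 1)) ∧
    ¬((∀ (x y : EuclideanSpace ℝ (Fin n)) (t : ℝ),
          -1 < U ((inner ℝ a x : ℝ) + (inner ℝ b y : ℝ) + ν * t) ∧
          U ((inner ℝ a x : ℝ) + (inner ℝ b y : ℝ) + ν * t) < 1) ∧
      (∀ (x y : EuclideanSpace ℝ (Fin n)) (t : ℝ),
          0 < ν * deriv U ((inner ℝ a x : ℝ) + (inner ℝ b y : ℝ) + ν * t))) :=
  stmt6_general n U hU a b hab ν hν hpde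
end
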